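/- The loss in distillable EPR pairs in the decohered mother protocol equals half the mutual-information drop: with the optimal measurement on B, (1/2)I(A:B) − (1/2)I(A':B') = (1/2)D(A:B), where D(A:B) is the quantum discord of ρ_AB. -/

import Mathlib

open scoped BigOperators Kronecker ComplexOrder
open Matrix

noncomputable section

/-- `-(x log₂ x)`, the summand of Shannon entropy. -/
def negxlog (x : ℝ) : ℝ := -(x * Real.logb 2 x)

/-- Von Neumann entropy (base-2) of a matrix, via the eigenvalues of a Hermitian matrix. -/
def vnEntropy {n : Type*} [Fintype n] [DecidableEq n] (ρ : Matrix n n ℂ) : ℝ :=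
  if h : ρ.IsHermitian then ∑ i, negxlog (h.eigenvalues i) else 0

/-- A density operator: positive semidefinite with unit trace. -/
def IsDensity {n : Type*} [Fintype n] [DecidableEq n] (ρ : Matrix n n ℂ) : Prop :=
  ρ.PosSemidef ∧ ρ.trace = 1

/-- Partial trace over the second factor. -/
def trB {α β : Type*} [Fintype β] (ρ : Matrix (α × β) (α × β) ℂ) : Matrix α α ℂ :=
  fun i j => ∑ k, ρ (i, k) (j, k)

/-- Partial trace over the first factor. -/
def trA {α β : Type*} [Fintype α] (ρ : Matrix (α × β) (α × β) ℂ) : Matrix β β ℂ :=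
  fun i j => ∑ k, ρ (k, i) (k, j)

/-- Partial trace over the third factor of a tripartite system `α × (β × γ)`. -/
def trC3 {α β γ : Type*} [Fintype γ] (ρ : Matrix (α × β × γ) (α × β × γ) ℂ) :
    Matrix (α × β) (α × β) ℂ :=
  fun i j => ∑ k, ρ (i.1, (i.2, k)) (j.1, (j.2, k))

/-- Partial trace over the second factor of a tripartite system `α × (β × γ)`. -/
def trB3 {α β γ : Type*} [Fintype β] (ρ : Matrix (α × β × γ) (α × β × γ) ℂ) :
    Matrix (α × γ) (α × γ) ℂ :=
  fun i j => ∑ k, ρ (i.1, (k, i.2)) (j.1, (k, j.2))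

/-- Partial trace over the first and third factors of a tripartite system `α × (β × γ)`. -/
def trAC3 {α β γ : Type*} [Fintype α] [Fintype γ] (ρ : Matrix (α × β × γ) (α × β × γ) ℂ) :
    Matrix β β ℂ :=
  fun i j => ∑ k : α, ∑ l : γ, ρ (k, (i, l)) (k, (j, l))

/-- A family of vectors is orthonormal. -/
def OrthonormalFam {ι β : Type*} [Fintype β] [DecidableEq ι] (e : ι → β → ℂ) : Prop :=
  ∀ i j, (∑ x, (starRingEnd ℂ) (e i x) * e j x) = if i = j then 1 else 0

/-- The rank-one operator `|v⟩⟨v|`. -/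
def projKet {β : Type*} (v : β → ℂ) : Matrix β β ℂ :=
  Matrix.vecMulVec v (star v)

/-- An orthonormal basis of `β`: an orthonormal family which is complete. -/
def IsONB {β : Type*} [Fintype β] [DecidableEq β] (e : β → β → ℂ) : Prop :=
  OrthonormalFam e ∧ (∑ j, projKet (e j)) = 1

/-- The operator `(I_A ⊗ ⟨v|) ρ (I_A ⊗ |w⟩)` on `A`. -/
def condOp2 {α β : Type*} [Fintype α] [Fintype β]
    (ρ : Matrix (α × β) (α × β) ℂ) (v w : β → ℂ) : Matrix α α ℂ :=
  fun i j => ∑ x, ∑ y, (starRingEnd ℂ) (v x) * ρ (i, x) (j, y) * w y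

/-- The unnormalized conditional operator `(I_A ⊗ ⟨v|) ρ (I_A ⊗ |v⟩)`. -/
def condOp {α β : Type*} [Fintype α] [Fintype β]
    (ρ : Matrix (α × β) (α × β) ℂ) (v : β → ℂ) : Matrix α α ℂ :=
  condOp2 ρ v v

/-- Outcome probability `p = Tr(ρ (I ⊗ |v⟩⟨v|))`. -/
def prob {α β : Type*} [Fintype α] [Fintype β]
    (ρ : Matrix (α × β) (α × β) ℂ) (v : β → ℂ) : ℝ :=
  (Matrix.trace (condOp ρ v)).re

/-- Normalized conditional state `ρ_{A|v}`. -/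
def condState {α β : Type*} [Fintype α] [Fintype β]
    (ρ : Matrix (α × β) (α × β) ℂ) (v : β → ℂ) : Matrix α α ℂ :=
  (prob ρ v)⁻¹ • condOp ρ v

/-- Measured (average) conditional entropy `Σ_i p_i S(ρ_{A|i})` for rank-one elements `|v i⟩⟨v i|`. -/
def measCondEnt {α β ι : Type*} [Fintype α] [Fintype β] [DecidableEq α]
    [Fintype ι] (ρ : Matrix (α × β) (α × β) ℂ) (v : ι → β → ℂ) : ℝ :=
  ∑ i, prob ρ (v i) * vnEntropy (condState ρ (v i))

/-- Quantum conditional entropy `S(A|B) = S(ρ_AB) - S(ρ_B)`. -/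
def condEnt {α β : Type*} [Fintype α] [Fintype β] [DecidableEq α] [DecidableEq β]
    (ρ : Matrix (α × β) (α × β) ℂ) : ℝ :=
  vnEntropy ρ - vnEntropy (trA ρ)

/-- Quantum mutual information `I(A:B) = S(ρ_A) + S(ρ_B) - S(ρ_AB)`. -/
def mutualInfo {α β : Type*} [Fintype α] [Fintype β] [DecidableEq α] [DecidableEq β]
    (ρ : Matrix (α × β) (α × β) ℂ) : ℝ :=
  vnEntropy (trB ρ) + vnEntropy (trA ρ) - vnEntropy ρ

/-- Quantum discord `D(A:B) = inf over rank-1 POVMs of S̃(A|B) - S(A|B)`. -/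
def discord (α β : Type*) [Fintype α] [Fintype β] [DecidableEq α] [DecidableEq β]
    (ρ : Matrix (α × β) (α × β) ℂ) : ℝ :=
  sInf { r : ℝ | ∃ (n : ℕ) (v : Fin n → β → ℂ),
      (∑ i, projKet (v i)) = 1 ∧ r = measCondEnt ρ v } - condEnt ρ

/-- A POVM: positive semidefinite elements summing to the identity. -/
def IsPOVM {β ι : Type*} [Fintype β] [DecidableEq β] [Fintype ι]
    (M : ι → Matrix β β ℂ) : Prop :=
  (∀ i, (M i).PosSemidef) ∧ (∑ i, M i) = 1

/-- Outcome probability for a general POVM element. -/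
def povmProb {α β : Type*} [Fintype α] [Fintype β] [DecidableEq α] [DecidableEq β]
    (ρ : Matrix (α × β) (α × β) ℂ) (M : Matrix β β ℂ) : ℝ :=
  (Matrix.trace (trB (ρ * ((1 : Matrix α α ℂ) ⊗ₖ M)))).re

/-- Normalized conditional state for a general POVM element. -/
def povmCondState {α β : Type*} [Fintype α] [Fintype β] [DecidableEq α] [DecidableEq β]
    (ρ : Matrix (α × β) (α × β) ℂ) (M : Matrix β β ℂ) : Matrix α α ℂ :=
  (povmProb ρ M)⁻¹ • trB (ρ * ((1 : Matrix α α ℂ) ⊗ₖ M))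

/-- Measured conditional entropy for a general POVM. -/
def povmMCE {α β ι : Type*} [Fintype α] [Fintype β] [DecidableEq α] [DecidableEq β]
    [Fintype ι] (ρ : Matrix (α × β) (α × β) ℂ) (M : ι → Matrix β β ℂ) : ℝ :=
  ∑ i, povmProb ρ (M i) * vnEntropy (povmCondState ρ (M i))

end

/-!
The decohered state `ρ' = Σ_j p_j ρ_{A|j} ⊗ |j⟩⟨j|` is block diagonal with blocks
`p_j ρ_{A|j}`. Because the measurement is complete its `A`-marginal is still `ρ_A`, its register
marginal is `diag p`, and the entropy of a block-diagonal matrix is the sum of the entropies of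
its blocks, with `S(p σ) = p S(σ) - p log p` for a state `σ`. The Shannon terms cancel and
`I(A':B') = S(ρ_A) - Σ_j p_j S(ρ_{A|j})`, so the supremum over measurements is `S(ρ_A)` minus
the infimum that defines the discord.
-/

open Polynomial

theorem Matrix.charmatrix_blockDiagonal {R m o : Type*} [CommRing R] [Fintype m] [DecidableEq m]
    [Fintype o] [DecidableEq o] (M : o → Matrix m m R) :
    charmatrix (blockDiagonal M) = blockDiagonal fun k => charmatrix (M k) := by
  refine Matrix.ext fun ⟨i, k⟩ ⟨j, k'⟩ => ?_
  simp only [charmatrix_apply, blockDiagonal_apply, diagonal_apply, Prod.mk.injEq]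
  split_ifs <;> simp_all

theorem Matrix.charpoly_blockDiagonal {R m o : Type*} [CommRing R] [Fintype m] [DecidableEq m]
    [Fintype o] [DecidableEq o] (M : o → Matrix m m R) :
    (blockDiagonal M).charpoly = ∏ k, (M k).charpoly := by
  rw [charpoly, charmatrix_blockDiagonal, det_blockDiagonal]
  rfl

theorem Matrix.sum_kronecker_single_eq_blockDiagonal {R m ι : Type*} [Semiring R] [Fintype ι]
    [DecidableEq ι] (M : ι → Matrix m m R) :
    ∑ i, M i ⊗ₖ single i i (1 : R) = blockDiagonal M := by
  refine Matrix.ext fun ⟨a, k⟩ ⟨b, l⟩ => ?_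
  simp only [Matrix.sum_apply, kroneckerMap_apply, single_apply, blockDiagonal_apply]
  split_ifs with hkl
  · subst hkl
    simp
  · exact Finset.sum_eq_zero fun i _ => by grind

lemma negxlog_zero : negxlog 0 = 0 := by simp [negxlog]

lemma negxlog_mul (a b : ℝ) : negxlog (a * b) = a * negxlog b + b * negxlog a := by
  rcases eq_or_ne a 0 with rfl | ha
  · simp [negxlog]
  rcases eq_or_ne b 0 with rfl | hb
  · simp [negxlog]
  simp only [negxlog, Real.logb, Real.log_mul ha hb]
  ring

/-- Unlike `vnEntropy`, which goes through a chosen eigenbasis, this is read off the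
characteristic polynomial, so it is additive over block-diagonal matrices. -/
noncomputable def charpolyEntropy {n : Type*} [Fintype n] [DecidableEq n] (M : Matrix n n ℂ) : ℝ :=
  (M.charpoly.roots.map fun z => negxlog z.re).sum

section Entropy

variable {n : Type*} [Fintype n] [DecidableEq n]

lemma charpolyEntropy_conj_diagonal {U : Matrix n n ℂ} (hU : star U * U = 1) (d : n → ℂ) :
    charpolyEntropy (U * diagonal d * star U) = ∑ i, negxlog (d i).re := by
  rw [charpolyEntropy, charpoly_mul_comm, ← mul_assoc, hU, one_mul, charpoly_diagonal,
    roots_prod _ _ (Finset.prod_ne_zero_iff.mpr fun i _ => X_sub_C_ne_zero (d i))]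
  simp

lemma vnEntropy_eq_charpolyEntropy {M : Matrix n n ℂ} (hM : M.IsHermitian) :
    vnEntropy M = charpolyEntropy M := by
  rw [vnEntropy, dif_pos hM, charpolyEntropy, hM.roots_charpoly_eq_eigenvalues, Multiset.map_map]
  simp only [Function.comp_def]
  rfl

lemma charpolyEntropy_blockDiagonal {ι : Type*} [Fintype ι] [DecidableEq ι]
    (M : ι → Matrix n n ℂ) :
    charpolyEntropy (blockDiagonal M) = ∑ i, charpolyEntropy (M i) := by
  rw [charpolyEntropy, charpoly_blockDiagonal,
    roots_prod _ _ (Finset.prod_ne_zero_iff.mpr fun i _ => (M i).charpoly_monic.ne_zero),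
    Multiset.map_bind, Multiset.sum_bind]
  rfl

lemma vnEntropy_diagonal_ofReal (d : n → ℝ) :
    vnEntropy (diagonal fun i => (d i : ℂ)) = ∑ i, negxlog (d i) := by
  have hd : (diagonal fun i => (d i : ℂ)).IsHermitian := by
    simp [IsHermitian, diagonal_conjTranspose, Pi.star_def]
  rw [vnEntropy_eq_charpolyEntropy hd,
    show diagonal (fun i => (d i : ℂ)) = 1 * diagonal (fun i => (d i : ℂ)) * star 1 by simp,
    charpolyEntropy_conj_diagonal (by simp)]
  simp

lemma charpolyEntropy_smul {σ : Matrix n n ℂ} (hσ : σ.IsHermitian) (p : ℝ) :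
    charpolyEntropy (p • σ) = p * vnEntropy σ + negxlog p * σ.trace.re := by
  set U : Matrix n n ℂ := (hσ.eigenvectorUnitary : Matrix n n ℂ)
  have hU : star U * U = 1 := Matrix.mem_unitaryGroup_iff'.mp hσ.eigenvectorUnitary.2
  have hdiag : p • σ = U * diagonal (fun i => ((p * hσ.eigenvalues i : ℝ) : ℂ)) * star U := by
    conv_lhs => rw [hσ.spectral_theorem]
    rw [Unitary.conjStarAlgAut_apply, ← smul_mul_assoc, ← mul_smul_comm, ← diagonal_smul]
    congr 3
    ext i
    simp [Complex.real_smul]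
  rw [hdiag, charpolyEntropy_conj_diagonal hU, vnEntropy, dif_pos hσ,
    hσ.trace_eq_sum_eigenvalues, Complex.re_sum, Finset.mul_sum, Finset.mul_sum,
    ← Finset.sum_add_distrib]
  refine Finset.sum_congr rfl fun i _ => ?_
  simp only [Complex.ofReal_re, negxlog_mul]
  simp [mul_comm]

lemma vnEntropy_nonneg {M : Matrix n n ℂ} (hM : M.PosSemidef) (htr : M.trace.re ≤ 1) :
    0 ≤ vnEntropy M := by
  rw [vnEntropy, dif_pos hM.isHermitian]
  have hsum : ∑ i, hM.isHermitian.eigenvalues i = M.trace.re := by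
    simp [hM.isHermitian.trace_eq_sum_eigenvalues]
  refine Finset.sum_nonneg fun i _ => ?_
  have h0 := hM.eigenvalues_nonneg i
  have h1 : hM.isHermitian.eigenvalues i ≤ 1 := hsum ▸ htr |>.trans' <|
    Finset.single_le_sum (fun j _ => hM.eigenvalues_nonneg j) (Finset.mem_univ i)
  exact neg_nonneg.mpr (mul_nonpos_of_nonneg_of_nonpos h0 (Real.logb_nonpos one_lt_two h0 h1))

end Entropy

namespace Matrix.PosSemidef

variable {n : Type*} [Fintype n] {M : Matrix n n ℂ}

lemma trace_eq_ofReal_re (hM : M.PosSemidef) : M.trace = (M.trace.re : ℂ) :=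
  Complex.eq_re_of_ofReal_le (r := 0) (by simpa using hM.trace_nonneg)

lemma trace_re_nonneg (hM : M.PosSemidef) : 0 ≤ M.trace.re :=
  (Complex.nonneg_iff.mp hM.trace_nonneg).1

lemma eq_zero_of_trace_re_eq_zero [DecidableEq n] (hM : M.PosSemidef) (h : M.trace.re = 0) :
    M = 0 :=
  hM.trace_eq_zero_iff.mp (by rw [hM.trace_eq_ofReal_re, h, Complex.ofReal_zero])

end Matrix.PosSemidef

/-- The matrix of `I_α ⊗ |v⟩`. -/
def tensorKet (α : Type*) [DecidableEq α] {β : Type*} (v : β → ℂ) : Matrix (α × β) α ℂ :=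
  fun r c => if r.1 = c then v r.2 else 0

section Conditioning

variable {α β : Type*} [Fintype α] [Fintype β] {ρ : Matrix (α × β) (α × β) ℂ}

lemma condOp_eq_conjTranspose_mul_mul [DecidableEq α] (ρ : Matrix (α × β) (α × β) ℂ)
    (v : β → ℂ) : condOp ρ v = (tensorKet α v)ᴴ * ρ * tensorKet α v := by
  ext a b
  simp only [condOp, condOp2, mul_apply, conjTranspose_apply, tensorKet, Fintype.sum_prod_type,
    apply_ite star, star_zero, ite_mul, mul_ite, zero_mul, mul_zero, Finset.sum_ite_irrel,
    Finset.sum_const_zero, Finset.sum_ite_eq', Finset.mem_univ, if_true,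
    Finset.sum_mul]
  rw [Finset.sum_comm]
  rfl

lemma condOp_posSemidef (hρ : ρ.PosSemidef) (v : β → ℂ) : (condOp ρ v).PosSemidef := by
  classical
  rw [condOp_eq_conjTranspose_mul_mul]
  exact hρ.conjTranspose_mul_mul_same _

lemma prob_nonneg (hρ : ρ.PosSemidef) (v : β → ℂ) : 0 ≤ prob ρ v :=
  (condOp_posSemidef hρ v).trace_re_nonneg

lemma prob_smul_condState (hρ : ρ.PosSemidef) (v : β → ℂ) :
    prob ρ v • condState ρ v = condOp ρ v := by
  classical
  rcases eq_or_ne (prob ρ v) 0 with h | h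
  · rw [h, zero_smul, (condOp_posSemidef hρ v).eq_zero_of_trace_re_eq_zero h]
  · rw [condState, smul_smul, mul_inv_cancel₀ h, one_smul]

lemma condState_posSemidef (hρ : ρ.PosSemidef) (v : β → ℂ) : (condState ρ v).PosSemidef :=
  (condOp_posSemidef hρ v).smul (inv_nonneg.mpr (prob_nonneg hρ v))

lemma condState_trace_re {v : β → ℂ} (h : prob ρ v ≠ 0) : (condState ρ v).trace.re = 1 := by
  rw [condState, trace_smul, Complex.real_smul, Complex.re_ofReal_mul]
  exact inv_mul_cancel₀ h

lemma condState_trace_re_le_one (hρ : ρ.PosSemidef) (v : β → ℂ) :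
    (condState ρ v).trace.re ≤ 1 := by
  rw [condState, trace_smul, Complex.real_smul, Complex.re_ofReal_mul]
  exact inv_mul_le_one_of_le₀ le_rfl (prob_nonneg hρ v)

lemma measCondEnt_nonneg [DecidableEq α] (hρ : ρ.PosSemidef) {ι : Type*} [Fintype ι]
    (v : ι → β → ℂ) : 0 ≤ measCondEnt ρ v :=
  Finset.sum_nonneg fun i _ => mul_nonneg (prob_nonneg hρ (v i))
    (vnEntropy_nonneg (condState_posSemidef hρ (v i)) (condState_trace_re_le_one hρ (v i)))

lemma sum_condOp_eq_trB {ι : Type*} [Fintype ι] [DecidableEq β] {v : ι → β → ℂ}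
    (hv : ∑ i, projKet (v i) = 1) (ρ : Matrix (α × β) (α × β) ℂ) :
    ∑ i, condOp ρ (v i) = trB ρ := by
  have hv' : ∀ x y, ∑ i, v i y * starRingEnd ℂ (v i x) = if y = x then 1 else 0 := fun x y => by
    simpa [Matrix.sum_apply, projKet, vecMulVec_apply, one_apply] using congr_fun₂ hv y x
  ext a b
  calc (∑ i, condOp ρ (v i)) a b
      = ∑ x, ∑ y, ρ (a, x) (b, y) * ∑ i, v i y * starRingEnd ℂ (v i x) := by
        simp only [Matrix.sum_apply, condOp, condOp2, Finset.mul_sum]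
        rw [Finset.sum_comm]
        refine Finset.sum_congr rfl fun x _ => ?_
        rw [Finset.sum_comm]
        exact Finset.sum_congr rfl fun y _ => Finset.sum_congr rfl fun i _ => by ring
    _ = trB ρ a b := by simp [hv', trB]

end Conditioning

section BlockDiagonal

variable {α ι : Type*} [DecidableEq ι] (M : ι → Matrix α α ℂ)

lemma trB_blockDiagonal [Fintype ι] : trB (blockDiagonal M) = ∑ i, M i := by
  ext a b
  simp [trB, Matrix.sum_apply, blockDiagonal_apply]

lemma trA_blockDiagonal [Fintype α] : trA (blockDiagonal M) = diagonal fun i => (M i).trace := by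
  ext k l
  rcases eq_or_ne k l with rfl | hkl
  · simp [trA, blockDiagonal_apply, trace]
  · simp [trA, blockDiagonal_apply, hkl]

end BlockDiagonal

section Decoherence

variable {α β : Type*} [Fintype α] [Fintype β] {ρ : Matrix (α × β) (α × β) ℂ}

lemma decohered_eq_blockDiagonal (hρ : ρ.PosSemidef) {n : ℕ} (v : Fin n → β → ℂ) :
    ∑ i, prob ρ (v i) • (condState ρ (v i) ⊗ₖ (single i i 1 : Matrix (Fin n) (Fin n) ℂ))
      = blockDiagonal fun i => condOp ρ (v i) := by
  simp_rw [← smul_kronecker, prob_smul_condState hρ, sum_kronecker_single_eq_blockDiagonal]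

variable [DecidableEq α]

lemma vnEntropy_blockDiagonal_condOp (hρ : ρ.PosSemidef) {n : ℕ} (v : Fin n → β → ℂ) :
    vnEntropy (blockDiagonal fun i => condOp ρ (v i))
      = measCondEnt ρ v + ∑ i, negxlog (prob ρ (v i)) := by
  have hherm : (blockDiagonal fun i => condOp ρ (v i)).IsHermitian := by
    simp only [IsHermitian, blockDiagonal_conjTranspose, (condOp_posSemidef hρ _).isHermitian.eq]
  rw [vnEntropy_eq_charpolyEntropy hherm, charpolyEntropy_blockDiagonal, measCondEnt,
    ← Finset.sum_add_distrib]
  refine Finset.sum_congr rfl fun i _ => ?_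
  rw [← prob_smul_condState hρ,
    charpolyEntropy_smul (condState_posSemidef hρ (v i)).isHermitian]
  rcases eq_or_ne (prob ρ (v i)) 0 with h | h
  · simp [h, negxlog_zero]
  · rw [condState_trace_re h, mul_one]

variable [DecidableEq β]

lemma mutualInfo_decohered (hρ : ρ.PosSemidef) {n : ℕ} (v : Fin n → β → ℂ)
    (hv : ∑ i, projKet (v i) = 1) :
    mutualInfo (∑ i, prob ρ (v i) •
        (condState ρ (v i) ⊗ₖ (single i i 1 : Matrix (Fin n) (Fin n) ℂ)))
      = vnEntropy (trB ρ) - measCondEnt ρ v := by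
  have htrA : trA (blockDiagonal fun i => condOp ρ (v i))
      = diagonal fun i => (prob ρ (v i) : ℂ) := by
    rw [trA_blockDiagonal]
    exact congrArg diagonal (funext fun i => (condOp_posSemidef hρ (v i)).trace_eq_ofReal_re)
  rw [decohered_eq_blockDiagonal hρ, mutualInfo, trB_blockDiagonal, sum_condOp_eq_trB hv, htrA,
    vnEntropy_diagonal_ofReal, vnEntropy_blockDiagonal_condOp hρ]
  ring

end Decoherence

lemma exists_complete_rank_one_measurement (β : Type*) [Fintype β] [DecidableEq β] :
    ∃ (n : ℕ) (v : Fin n → β → ℂ), ∑ i, projKet (v i) = 1 := by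
  refine ⟨Fintype.card β, fun i => Pi.single ((Fintype.equivFin β).symm i) 1, ?_⟩
  rw [Equiv.sum_comp (Fintype.equivFin β).symm fun b => projKet (Pi.single b (1 : ℂ))]
  ext x y
  simp [Matrix.sum_apply, projKet, vecMulVec_apply, one_apply, Pi.single_apply]

lemma Real.sSup_image_const_sub {s : Set ℝ} (hne : s.Nonempty) (hbdd : BddBelow s) (c : ℝ) :
    sSup ((c - ·) '' s) = c - sInf s :=
  ((OrderIso.subLeft c).map_csInf' hne hbdd).symm

/-- the loss in distillable EPR pairs in the decohered mother protocol equals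
half the discord: `(1/2) I(A:B) - (1/2) sup I(A':B') = (1/2) D(A:B)`. -/
theorem mother_protocol_loss_eq_half_discord
    {α β : Type*} [Fintype α] [Fintype β] [DecidableEq α] [DecidableEq β]
    (ρ : Matrix (α × β) (α × β) ℂ) (hρ : IsDensity ρ) :
    (1 / 2) * mutualInfo ρ -
      (1 / 2) * sSup { r : ℝ | ∃ (n : ℕ) (v : Fin n → β → ℂ),
        (∑ i, projKet (v i)) = 1 ∧
        r = mutualInfo (∑ i, prob ρ (v i) •
              (condState ρ (v i) ⊗ₖ (Matrix.single i i 1 : Matrix (Fin n) (Fin n) ℂ))) }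
    = (1 / 2) * discord α β ρ := by
  set T := { r : ℝ | ∃ (n : ℕ) (v : Fin n → β → ℂ),
      (∑ i, projKet (v i)) = 1 ∧ r = measCondEnt ρ v }
  have hset : { r : ℝ | ∃ (n : ℕ) (v : Fin n → β → ℂ), (∑ i, projKet (v i)) = 1 ∧
        r = mutualInfo (∑ i, prob ρ (v i) •
              (condState ρ (v i) ⊗ₖ (Matrix.single i i 1 : Matrix (Fin n) (Fin n) ℂ))) }
      = (vnEntropy (trB ρ) - ·) '' T := by
    ext r
    constructor
    · rintro ⟨n, v, hv, rfl⟩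
      exact ⟨_, ⟨n, v, hv, rfl⟩, (mutualInfo_decohered hρ.1 v hv).symm⟩
    · rintro ⟨_, ⟨n, v, hv, rfl⟩, rfl⟩
      exact ⟨n, v, hv, (mutualInfo_decohered hρ.1 v hv).symm⟩
  have hne : T.Nonempty :=
    let ⟨n, v, hv⟩ := exists_complete_rank_one_measurement β
    ⟨_, n, v, hv, rfl⟩
  have hbdd : BddBelow T := ⟨0, by rintro _ ⟨n, v, -, rfl⟩; exact measCondEnt_nonneg hρ.1 v⟩
  rw [hset, Real.sSup_image_const_sub hne hbdd, discord, mutualInfo, condEnt]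
  ring
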